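/- Let ρ be a PSD matrix indexed by (Fin d_a) × (Fin d) with trace 1, and let u be a Hermitian matrix indexed by (Fin d_a) × (Fin d) such that Re(Tr(ρ·u)) + λmax(−A†(u)) < 0. Define W := −u − λmax(−A†(u))·I. Then W is Hermitian, Re(Tr(ρ·W)) > 0, the matrix A†(W) is negative semidefinite, and Re(Tr(A(X)·W)) ≤ 0 for every PSD matrix X indexed by (Fin d_a) × J_k; that is, W is an entanglement witness certifying that ρ does not lie in EXT_k. -/

import Mathlib

open Matrix
open scoped Kronecker ComplexOrder

noncomputable section

instance monoDecidable {k d : ℕ} : DecidablePred (Monotone : (Fin k → Fin d) → Prop) :=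
  fun f => decidable_of_iff (∀ a b : Fin k, a ≤ b → f a ≤ f b) Iff.rfl

/-- `Jk d k` : nondecreasing sequences of length `k` from `{0, …, d-1}`. -/
abbrev Jk (d k : ℕ) := {f : Fin k → Fin d // Monotone f}

/-- the nondecreasing rearrangement of a sequence. -/
def sortTuple {d k : ℕ} (i : Fin k → Fin d) : Jk d k :=
  ⟨i ∘ Tuple.sort i, Tuple.monotone_sort i⟩

/-- `permCount j` : the number of sequences whose sorted rearrangement is `j`. -/
def permCount {d k : ℕ} (j : Jk d k) : ℕ :=
  (Finset.univ.filter fun i : Fin k → Fin d => sortTuple i = j).card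

/-- The scaled partition matrix `P`. -/
def Pmat (d k : ℕ) : Matrix (Fin k → Fin d) (Jk d k) ℂ :=
  fun i j => if sortTuple i = j then (((permCount j : ℝ) ^ (-(1/2) : ℝ) : ℝ) : ℂ) else 0

/-- `cons0 b r` is the sequence `b⌢r` sending `0` to `b` and `s+1` to `r s`. -/
def cons0 {d k : ℕ} (b : Fin d) (r : Fin (k - 1) → Fin d) : Fin k → Fin d :=
  fun s => if h : (s : ℕ) = 0 then b else r ⟨(s : ℕ) - 1, by have := s.isLt; omega⟩

/-- Partial trace over the last `k - 1` factors. -/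
def PTr (da d k : ℕ)
    (M : Matrix (Fin da × (Fin k → Fin d)) (Fin da × (Fin k → Fin d)) ℂ) :
    Matrix (Fin da × Fin d) (Fin da × Fin d) ℂ :=
  fun p q => ∑ r : Fin (k - 1) → Fin d, M (p.1, cons0 p.2 r) (q.1, cons0 q.2 r)

/-- The operator `A`. -/
def Amap (da d k : ℕ) (X : Matrix (Fin da × Jk d k) (Fin da × Jk d k) ℂ) :
    Matrix (Fin da × Fin d) (Fin da × Fin d) ℂ :=
  PTr da d k (((1 : Matrix (Fin da) (Fin da) ℂ) ⊗ₖ Pmat d k) * X *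
    ((1 : Matrix (Fin da) (Fin da) ℂ) ⊗ₖ Pmat d k)ᴴ)

/-- The extension operator `E` : `E(W) ((a,i),(a',i')) = W ((a, i 0), (a', i' 0))` when
`i` and `i'` agree on all later coordinates, and `0` otherwise. -/
def Emat (da d k : ℕ) (hk : 0 < k)
    (W : Matrix (Fin da × Fin d) (Fin da × Fin d) ℂ) :
    Matrix (Fin da × (Fin k → Fin d)) (Fin da × (Fin k → Fin d)) ℂ :=
  fun p q =>
    if ∀ s : Fin (k - 1),
        p.2 ⟨(s : ℕ) + 1, by have := s.isLt; omega⟩ =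
          q.2 ⟨(s : ℕ) + 1, by have := s.isLt; omega⟩
    then W (p.1, p.2 ⟨0, hk⟩) (q.1, q.2 ⟨0, hk⟩) else 0

/-- The adjoint operator `A†`. -/
def Adag (da d k : ℕ) (hk : 0 < k)
    (W : Matrix (Fin da × Fin d) (Fin da × Fin d) ℂ) :
    Matrix (Fin da × Jk d k) (Fin da × Jk d k) ℂ :=
  ((1 : Matrix (Fin da) (Fin da) ℂ) ⊗ₖ Pmat d k)ᴴ * Emat da d k hk W *
    ((1 : Matrix (Fin da) (Fin da) ℂ) ⊗ₖ Pmat d k)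

/-- Partial transpose in the second index. -/
def pTransp {m α : Type*} (M : Matrix (m × α) (m × α) ℂ) : Matrix (m × α) (m × α) ℂ :=
  fun p q => M (p.1, q.2) (q.1, p.2)

/-- Squared Frobenius norm. -/
def frobSq {α β : Type*} [Fintype α] [Fintype β] (M : Matrix α β ℂ) : ℝ :=
  ∑ p, ∑ q, ‖M p q‖ ^ 2

/-- Largest eigenvalue of a Hermitian matrix. -/
def lamMax {n : Type*} [Fintype n] [DecidableEq n]
    {M : Matrix n n ℂ} (hM : M.IsHermitian) : ℝ :=
  ⨆ i, hM.eigenvalues i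

end

/-!
The partial trace over the last `k - 1` factors is, after splitting `i = i 0 ⌢ tail`, the
trace dual of `W ↦ W ⊗ 1`, and that map is `E`. Hence `Tr (A X * W) = Tr (X * A† W)`, and
since `P` is an isometry `A† 1 = 1`, so `A† W = -A† u - λmax (-A† u) • 1` is negative
semidefinite by the definition of `λmax`. Then `Tr (A X * W) ≤ 0` for `X ⪰ 0`, while `Tr ρ = 1`
turns the hypothesis into `Re Tr (ρ * W) > 0`.
-/

namespace Matrix

def partialTraceRight {R m m' n : Type*} [AddCommMonoid R] [Fintype n]
    (M : Matrix (m × n) (m' × n) R) : Matrix m m' R :=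
  fun i j => ∑ r, M (i, r) (j, r)

variable {m n : Type*} [Fintype m] [Fintype n]

lemma trace_submatrix_equiv {R l : Type*} [AddCommMonoid R] [Fintype l] (M : Matrix m m R)
    (e : l ≃ m) : (M.submatrix e e).trace = M.trace :=
  e.sum_comp fun i => M i i

lemma trace_partialTraceRight_mul [DecidableEq n] {R : Type*} [CommSemiring R]
    (M : Matrix (m × n) (m × n) R) (W : Matrix m m R) :
    (partialTraceRight M * W).trace = (M * (W ⊗ₖ 1)).trace := by
  simp only [trace, diag_apply, mul_apply, partialTraceRight, kronecker_apply, one_apply,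
    Fintype.sum_prod_type, mul_ite, mul_one, mul_zero, Finset.sum_ite_eq', Finset.mem_univ,
    if_true, Finset.sum_mul]
  exact Finset.sum_congr rfl fun _ _ => Finset.sum_comm

variable [DecidableEq m]

lemma trace_mul_re_nonneg {A B : Matrix m m ℂ} (hA : A.PosSemidef) (hB : B.PosSemidef) :
    0 ≤ (A * B).trace.re := by
  obtain ⟨C, rfl⟩ : ∃ C : Matrix m m ℂ, A = Cᴴ * C := by
    open scoped MatrixOrder Matrix.Norms.L2Operator in
    exact CStarAlgebra.nonneg_iff_eq_star_mul_self.mp hA.nonneg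
  rw [← trace_mul_cycle]
  exact (Complex.nonneg_iff.mp (hB.mul_mul_conjTranspose_same C).trace_nonneg).1

lemma posSemidef_lamMax_smul_one_sub {M : Matrix m m ℂ} (hM : M.IsHermitian) :
    (((lamMax hM : ℝ) : ℂ) • (1 : Matrix m m ℂ) - M).PosSemidef := by
  open scoped MatrixOrder Matrix.Norms.L2Operator in
  have hle : M ≤ algebraMap ℝ (Matrix m m ℂ) (lamMax hM) := by
    refine le_algebraMap_of_spectrum_le (fun x hx => ?_) hM.isSelfAdjoint
    rw [hM.spectrum_real_eq_range_eigenvalues] at hx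
    obtain ⟨i, rfl⟩ := hx
    exact le_ciSup (Set.finite_range _).bddAbove i
  rw [Algebra.algebraMap_eq_smul_one, ← Complex.coe_smul] at hle
  exact Matrix.le_iff.mp hle

end Matrix

section Extension

variable {da d k : ℕ}

lemma cons0_succ (b : Fin d) (r : Fin (k - 1) → Fin d) (s : Fin (k - 1))
    (h : (s : ℕ) + 1 < k) : cons0 b r ⟨s + 1, h⟩ = r s := by
  simp [cons0]

def consEquiv (d k : ℕ) (hk : 0 < k) : Fin d × (Fin (k - 1) → Fin d) ≃ (Fin k → Fin d) where
  toFun p := cons0 p.1 p.2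
  invFun i := (i ⟨0, hk⟩, fun s => i ⟨s + 1, by omega⟩)
  left_inv p := Prod.ext rfl (funext fun s => cons0_succ p.1 p.2 s (by omega))
  right_inv i := by
    funext s
    by_cases hs : (s : ℕ) = 0
    · simp only [cons0, dif_pos hs]
      exact congrArg i (Fin.ext hs.symm)
    · simp only [cons0, dif_neg hs]
      exact congrArg i (Fin.ext (by simp; omega))

def splitEquiv (da d k : ℕ) (hk : 0 < k) :
    (Fin da × Fin d) × (Fin (k - 1) → Fin d) ≃ Fin da × (Fin k → Fin d) :=
  (Equiv.prodAssoc _ _ _).trans ((Equiv.refl _).prodCongr (consEquiv d k hk))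

lemma PTr_eq_partialTraceRight (hk : 0 < k)
    (M : Matrix (Fin da × (Fin k → Fin d)) (Fin da × (Fin k → Fin d)) ℂ) :
    PTr da d k M = (M.submatrix (splitEquiv da d k hk) (splitEquiv da d k hk)).partialTraceRight :=
  rfl

lemma Emat_eq_submatrix_kronecker (hk : 0 < k)
    (W : Matrix (Fin da × Fin d) (Fin da × Fin d) ℂ) :
    Emat da d k hk W =
      (W ⊗ₖ 1).submatrix (splitEquiv da d k hk).symm (splitEquiv da d k hk).symm := by
  ext ⟨a, i⟩ ⟨a', i'⟩
  simp [Emat, splitEquiv, consEquiv, one_apply, funext_iff]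

lemma trace_PTr_mul (hk : 0 < k)
    (M : Matrix (Fin da × (Fin k → Fin d)) (Fin da × (Fin k → Fin d)) ℂ)
    (W : Matrix (Fin da × Fin d) (Fin da × Fin d) ℂ) :
    (PTr da d k M * W).trace = (M * Emat da d k hk W).trace := by
  set e := splitEquiv da d k hk
  have hE : (Emat da d k hk W).submatrix e e = W ⊗ₖ 1 := by
    rw [Emat_eq_submatrix_kronecker, submatrix_submatrix, e.symm_comp_self, submatrix_id_id]
  rw [PTr_eq_partialTraceRight hk, trace_partialTraceRight_mul, ← hE, submatrix_mul_equiv,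
    trace_submatrix_equiv]

lemma Emat_one (hk : 0 < k) : Emat da d k hk 1 = 1 := by
  rw [Emat_eq_submatrix_kronecker, one_kronecker_one, submatrix_one_equiv]

lemma Emat_neg_sub_smul (hk : 0 < k) (u v : Matrix (Fin da × Fin d) (Fin da × Fin d) ℂ)
    (c : ℂ) :
    Emat da d k hk (-u - c • v) = -Emat da d k hk u - c • Emat da d k hk v := by
  ext p q
  simp only [Emat, Matrix.sub_apply, Matrix.neg_apply, Matrix.smul_apply]
  split_ifs <;> simp

lemma permCount_pos (j : Jk d k) : 0 < permCount j :=
  Finset.card_pos.mpr ⟨j.1, Finset.mem_filter.mpr ⟨Finset.mem_univ _,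
    Subtype.ext (by simp [sortTuple, Tuple.sort_eq_refl_iff_monotone.mpr j.2])⟩⟩

lemma Pmat_conjTranspose_mul_self (d k : ℕ) : (Pmat d k)ᴴ * Pmat d k = 1 := by
  ext j j'
  have hpos : (0 : ℝ) < permCount j := mod_cast permCount_pos j
  have hentry : ∀ i, star (Pmat d k i j) * Pmat d k i j' =
      if sortTuple i = j then (if j = j' then ((permCount j : ℝ)⁻¹ : ℂ) else 0) else 0 := by
    intro i
    by_cases hi : sortTuple i = j
    · subst hi
      by_cases hj : sortTuple i = j'
      · subst hj
        simp only [Pmat, if_true, Complex.star_def, Complex.conj_ofReal, ← Complex.ofReal_mul,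
          ← Real.rpow_add hpos]
        norm_num [Real.rpow_neg_one]
      · simp [Pmat, hj]
    · simp [Pmat, hi]
  simp only [mul_apply, conjTranspose_apply]
  rw [Finset.sum_congr rfl fun i _ => hentry i, Finset.sum_ite, Finset.sum_const,
    Finset.sum_const_zero, add_zero, ← permCount, one_apply]
  split_ifs
  · rw [nsmul_eq_mul]
    exact mul_inv_cancel₀ (mod_cast hpos.ne')
  · exact smul_zero _

lemma Adag_one (hk : 0 < k) : Adag da d k hk 1 = 1 := by
  rw [Adag, Emat_one, Matrix.mul_one, conjTranspose_kronecker, conjTranspose_one,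
    ← mul_kronecker_mul, one_mul, Pmat_conjTranspose_mul_self, one_kronecker_one]

lemma Adag_neg_sub_smul_one (hk : 0 < k) (u : Matrix (Fin da × Fin d) (Fin da × Fin d) ℂ)
    (c : ℂ) : Adag da d k hk (-u - c • 1) = -Adag da d k hk u - c • 1 := by
  rw [← Adag_one hk]
  simp only [Adag, Emat_neg_sub_smul, Matrix.mul_sub, Matrix.sub_mul, Matrix.mul_neg,
    Matrix.neg_mul, Matrix.mul_smul, Matrix.smul_mul]

lemma trace_Amap_mul (hk : 0 < k) (X : Matrix (Fin da × Jk d k) (Fin da × Jk d k) ℂ)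
    (W : Matrix (Fin da × Fin d) (Fin da × Fin d) ℂ) :
    (Amap da d k X * W).trace = (X * Adag da d k hk W).trace := by
  rw [Amap, trace_PTr_mul hk, Adag]
  simp only [Matrix.mul_assoc]
  rw [trace_mul_comm]
  simp only [Matrix.mul_assoc]

end Extension

theorem stmt14_general (da d k : ℕ) (hk : 0 < k)
    (ρ : Matrix (Fin da × Fin d) (Fin da × Fin d) ℂ)
    (hρtr : ρ.trace = 1)
    (u : Matrix (Fin da × Fin d) (Fin da × Fin d) ℂ) (hu : u.IsHermitian)
    (hnegH : (-(Adag da d k hk u)).IsHermitian)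
    (hlt : ((ρ * u).trace).re + lamMax hnegH < 0)
    (W : Matrix (Fin da × Fin d) (Fin da × Fin d) ℂ)
    (hW : W = -u - ((lamMax hnegH : ℝ) : ℂ) • (1 : Matrix (Fin da × Fin d) (Fin da × Fin d) ℂ)) :
    W.IsHermitian ∧
    0 < ((ρ * W).trace).re ∧
    (-(Adag da d k hk W)).PosSemidef ∧
    ∀ X : Matrix (Fin da × Jk d k) (Fin da × Jk d k) ℂ, X.PosSemidef →
      ((Amap da d k X * W).trace).re ≤ 0 := by
  set c : ℝ := lamMax hnegH
  have hAdagW : -Adag da d k hk W = (c : ℂ) • 1 - -Adag da d k hk u := by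
    rw [hW, Adag_neg_sub_smul_one]
    abel
  have hpsd : (-Adag da d k hk W).PosSemidef :=
    hAdagW ▸ posSemidef_lamMax_smul_one_sub hnegH
  refine ⟨hW ▸ hu.neg.sub (isHermitian_one.smul (Complex.conj_ofReal c)), ?_, hpsd, ?_⟩
  · have htr : (ρ * W).trace = -(ρ * u).trace - c := by
      rw [hW, Matrix.mul_sub, Matrix.mul_neg, Matrix.mul_smul, Matrix.mul_one, trace_sub,
        trace_neg, trace_smul, hρtr, smul_eq_mul, mul_one]
    rw [htr, Complex.sub_re, Complex.neg_re, Complex.ofReal_re]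
    linarith
  · intro X hX
    rw [trace_Amap_mul hk, ← neg_neg (Adag da d k hk W), Matrix.mul_neg, trace_neg,
      Complex.neg_re, neg_nonpos]
    exact trace_mul_re_nonneg hX hpsd

theorem stmt14 (da d k : ℕ) (hda : 0 < da) (hd : 0 < d) (hk : 0 < k)
    (ρ : Matrix (Fin da × Fin d) (Fin da × Fin d) ℂ)
    (hρ : ρ.PosSemidef) (hρtr : ρ.trace = 1)
    (u : Matrix (Fin da × Fin d) (Fin da × Fin d) ℂ) (hu : u.IsHermitian)
    (hnegH : (-(Adag da d k hk u)).IsHermitian)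
    (hlt : ((ρ * u).trace).re + lamMax hnegH < 0)
    (W : Matrix (Fin da × Fin d) (Fin da × Fin d) ℂ)
    (hW : W = -u - ((lamMax hnegH : ℝ) : ℂ) • (1 : Matrix (Fin da × Fin d) (Fin da × Fin d) ℂ)) :
    W.IsHermitian ∧
    0 < ((ρ * W).trace).re ∧
    (-(Adag da d k hk W)).PosSemidef ∧
    ∀ X : Matrix (Fin da × Jk d k) (Fin da × Jk d k) ℂ, X.PosSemidef →
      ((Amap da d k X * W).trace).re ≤ 0 :=
  stmt14_general da d k hk ρ hρtr u hu hnegH hlt W hW
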